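/- arXiv:2510.14728 — 2 statements merged into one kernel-verified Lean document; each statement's English description precedes it below -/
import Mathlib

section
/- Let T > 0, τ ∈ (0, T), a > 0 and b > 0, and let y : [0, T) → [0, ∞) be continuously differentiable with y'(t) + a·y(t) ≤ h(t) for all t ∈ (0, T), where h is a nonnegative locally integrable function on [0, T) satisfying ∫ₜ^{t+τ} h(s) ds ≤ b for all t ∈ [0, T − τ). Then y(t) ≤ max{y(0) + b, b/(aτ) + 2b} for all t ∈ (0, T). -/
open MeasureTheory Set

/-- uniform-in-time bound from a differential inequality with
locally integrable right-hand side.  Let `T > 0`, `τ ∈ (0, T)`, `a > 0`,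
`b > 0`, and let `y : [0, T) → [0, ∞)` be `C¹` (encoded by a derivative `y'`
which is continuous on `[0, T)`) with `y' t + a * y t ≤ h t` on `(0, T)`,
where `h ≥ 0` is locally integrable on `[0, T)` and
`∫ s in t..t+τ, h s ≤ b` for all `t ∈ [0, T − τ)`.  Then
`y t ≤ max (y 0 + b) (b / (a * τ) + 2 * b)` for all `t ∈ (0, T)`. -/
theorem stmt_1 (T τ a b : ℝ) (y y' h : ℝ → ℝ)
    (hT : 0 < T) (hτ : 0 < τ ∧ τ < T) (ha : 0 < a) (hb : 0 < b)
    (hy_nonneg : ∀ t, 0 ≤ t → t < T → 0 ≤ y t)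
    (hy_deriv : ∀ t, 0 ≤ t → t < T → HasDerivAt y (y' t) t)
    (hy'_cont : ContinuousOn y' (Ico 0 T))
    (hh_nonneg : ∀ t, 0 ≤ t → t < T → 0 ≤ h t)
    (hh_loc : ∀ t, 0 ≤ t → t < T → IntervalIntegrable h volume 0 t)
    (hineq : ∀ t, 0 < t → t < T → y' t + a * y t ≤ h t)
    (hint : ∀ t, 0 ≤ t → t < T - τ → ∫ s in t..(t + τ), h s ≤ b) :
    ∀ t, 0 < t → t < T → y t ≤ max (y 0 + b) (b / (a * τ) + 2 * b) := by
  obtain ⟨hτ0, hτT⟩ := hτ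
  set M := max (y 0 + b) (b / (a * τ) + 2 * b) with hM
  have hM1 : y 0 + b ≤ M := le_max_left _ _
  have hM2 : b / (a * τ) + 2 * b ≤ M := le_max_right _ _
  have haτ : 0 < a * τ := mul_pos ha hτ0
  -- continuity of y on [0, T)
  have hy_cont : ContinuousOn y (Ico 0 T) := fun u hu =>
    ((hy_deriv u hu.1 hu.2).continuousAt).continuousWithinAt
  have hsubset : ∀ s t : ℝ, 0 ≤ s → s ≤ t → t < T → uIcc s t ⊆ Ico 0 T := by
    intro s t hs hst htT
    rw [uIcc_of_le hst]
    exact fun u hu => ⟨hs.trans hu.1, lt_of_le_of_lt hu.2 htT⟩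
  have hy'I : ∀ s t : ℝ, 0 ≤ s → s ≤ t → t < T → IntervalIntegrable y' volume s t :=
    fun s t hs hst htT => (hy'_cont.mono (hsubset s t hs hst htT)).intervalIntegrable
  have hyI : ∀ s t : ℝ, 0 ≤ s → s ≤ t → t < T → IntervalIntegrable y volume s t :=
    fun s t hs hst htT => (hy_cont.mono (hsubset s t hs hst htT)).intervalIntegrable
  have hhI : ∀ s t : ℝ, 0 ≤ s → s ≤ t → t < T → IntervalIntegrable h volume s t :=
    fun s t hs hst htT =>
      ((hh_loc s hs (lt_of_le_of_lt hst htT)).symm).trans (hh_loc t (hs.trans hst) htT)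
  -- FTC
  have hFTC : ∀ s t : ℝ, 0 ≤ s → s ≤ t → t < T → ∫ u in s..t, y' u = y t - y s := by
    intro s t hs hst htT
    exact intervalIntegral.integral_eq_sub_of_hasDerivAt
      (fun x hx => hy_deriv x ((hsubset s t hs hst htT) hx).1 ((hsubset s t hs hst htT) hx).2)
      (hy'I s t hs hst htT)
  -- a.e. points are nonzero
  have h0 : ∀ᵐ u : ℝ ∂(volume : Measure ℝ), u ≠ 0 := by
    have hset : {u : ℝ | ¬ u ≠ 0} = {0} := by ext u; simp
    rw [MeasureTheory.ae_iff, hset]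
    exact measure_singleton 0
  -- integrated differential inequality
  have hkey : ∀ s t : ℝ, 0 ≤ s → s ≤ t → t < T →
      y t - y s + a * ∫ u in s..t, y u ≤ ∫ u in s..t, h u := by
    intro s t hs hst htT
    have h1 : ∫ u in s..t, (y' u + a * y u) ≤ ∫ u in s..t, h u := by
      apply intervalIntegral.integral_mono_ae_restrict hst
        ((hy'I s t hs hst htT).add ((hyI s t hs hst htT).const_mul a))
        (hhI s t hs hst htT)
      filter_upwards [ae_restrict_mem measurableSet_Icc, ae_restrict_of_ae h0] with u hu hu0
      exact hineq u (lt_of_le_of_ne (hs.trans hu.1) (Ne.symm hu0)) (lt_of_le_of_lt hu.2 htT)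
    rwa [intervalIntegral.integral_add (hy'I s t hs hst htT) ((hyI s t hs hst htT).const_mul a),
      intervalIntegral.integral_const_mul, hFTC s t hs hst htT] at h1
  -- comparison: y t ≤ y s + ∫ h
  have hA : ∀ s t : ℝ, 0 ≤ s → s ≤ t → t < T → y t ≤ y s + ∫ u in s..t, h u := by
    intro s t hs hst htT
    have h2 := hkey s t hs hst htT
    have h3 : 0 ≤ ∫ u in s..t, y u :=
      intervalIntegral.integral_nonneg hst
        (fun u hu => hy_nonneg u (hs.trans hu.1) (lt_of_le_of_lt hu.2 htT))
    nlinarith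
  -- bound on ∫ h over subintervals of length ≤ τ
  have hHb : ∀ r t : ℝ, 0 ≤ r → r ≤ t → t ≤ r + τ → r + τ < T → ∫ u in r..t, h u ≤ b := by
    intro r t hr hrt htrτ hτT'
    have hsplit := intervalIntegral.integral_add_adjacent_intervals
      (hhI r t hr hrt (lt_of_le_of_lt htrτ hτT')) (hhI t (r + τ) (hr.trans hrt) htrτ hτT')
    have hn : 0 ≤ ∫ u in t..(r + τ), h u :=
      intervalIntegral.integral_nonneg htrτ
        (fun u hu => hh_nonneg u ((hr.trans hrt).trans hu.1) (lt_of_le_of_lt hu.2 hτT'))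
    have hi := hint r hr (by linarith)
    linarith
  -- base case: t ≤ τ
  have hbase : ∀ t, 0 < t → t < T → t ≤ τ → y t ≤ M := by
    intro t ht htT htτ
    have h1 : ∫ u in (0:ℝ)..t, h u ≤ b :=
      hHb 0 t le_rfl ht.le (by linarith) (by linarith)
    have h2 := hA 0 t le_rfl ht.le htT
    linarith
  -- induction
  have key : ∀ n : ℕ, ∀ t, 0 < t → t < T → t ≤ (n + 1) * τ → y t ≤ M := by
    intro n
    induction n with
    | zero => intro t ht htT htn; exact hbase t ht htT (by norm_num at htn; linarith)
    | succ n ih =>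
      intro t ht htT htn
      by_cases hcase : t ≤ τ
      · exact hbase t ht htT hcase
      · push_neg at hcase
        by_contra hMt
        push_neg at hMt
        set r := t - τ with hr
        have hr0 : 0 < r := by simp only [hr]; linarith
        have hrT : r < T := by simp only [hr]; linarith
        have hrτ : r + τ = t := by simp [hr]
        have hHb' : ∫ u in r..t, h u ≤ b :=
          hHb r t hr0.le (by linarith) (by linarith) (by linarith)
        -- lower bound for y on [r, t]
        have hlow : ∀ s ∈ Icc r t, y t - b ≤ y s := by
          intro s hs
          have hst : y t ≤ y s + ∫ u in s..t, h u :=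
            hA s t (hr0.le.trans hs.1) hs.2 htT
          have hsp := intervalIntegral.integral_add_adjacent_intervals
            (hhI r s hr0.le hs.1 (lt_of_le_of_lt hs.2 htT))
            (hhI s t (hr0.le.trans hs.1) hs.2 htT)
          have hnn : 0 ≤ ∫ u in r..s, h u :=
            intervalIntegral.integral_nonneg hs.1
              (fun u hu => hh_nonneg u (hr0.le.trans hu.1)
                (lt_of_le_of_lt (hu.2.trans hs.2) htT))
          linarith
        have hIy : τ * (y t - b) ≤ ∫ u in r..t, y u := by
          have hconst := intervalIntegral.integral_mono_on (f := fun _ => y t - b)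
            (by linarith : r ≤ t) intervalIntegrable_const
            (hyI r t hr0.le (by linarith) htT) hlow
          rw [intervalIntegral.integral_const] at hconst
          have htr : t - r = τ := by simp [hr]
          rw [htr, smul_eq_mul] at hconst
          exact hconst
        have hk := hkey r t hr0.le (by linarith) htT
        have hyr : y r ≤ M := by
          apply ih r hr0 hrT
          have : t ≤ ((n : ℝ) + 1 + 1) * τ := by
            have := htn; push_cast at this ⊢; linarith
          simp only [hr]; push_cast; linarith
        -- derive contradiction
        have h7 : b / (a * τ) + b ≤ y t - b := by linarith
        have h8 : a * τ * (b / (a * τ) + b) ≤ a * τ * (y t - b) :=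
          mul_le_mul_of_nonneg_left h7 haτ.le
        have h9 : a * τ * (b / (a * τ) + b) = b + a * τ * b := by
          field_simp
        have h10 : a * τ * (y t - b) ≤ a * ∫ u in r..t, y u := by
          have := mul_le_mul_of_nonneg_left hIy ha.le
          linarith [mul_assoc a τ (y t - b)]
        nlinarith
  -- conclude
  intro t ht htT
  obtain ⟨n, hn⟩ := exists_nat_ge (t / τ)
  apply key n t ht htT
  rw [div_le_iff₀ hτ0] at hn
  nlinarith
end

section
/- Let a₁, a₂, a₃, a₄, a₅, a₆, α, β, γ be strictly positive real numbers satisfying a₂a₆ < 1 + a₁ + a₂ + a₁a₄ + a₄a₆, a₃·a₂a₆ < 1 + a₁(a₃ + a₄a₅) + a₄a₆ + a₂a₅, a₃(1 + a₂) + a₄a₅ < 1 + a₄ + a₂a₅, and a₅(1 + a₁) + a₆ < 1 + a₃(a₁ + a₆). Set D = 1 + a₁(a₃ + a₄a₅) + a₄a₆ + a₂(a₅ − a₃a₆). Then D > 0, and the coexistence steady-state components u* = (1 + a₁ + a₂ + a₁a₄ + a₆(a₄ − a₂))/D, v* = (1 − a₃(1 + a₂) + a₄ + a₅(a₂ − a₄))/D,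 w* = (1 + a₁(a₃ − a₅) − a₅ + a₆(a₃ − 1))/D and z* = (α·v* + β·w*)/γ are all strictly positive. -/
/-- positivity of the coexistence steady state under the
coexistence conditions (0.1).  If `a₁, …, a₆, α, β, γ > 0` satisfy the four
coexistence inequalities, then the denominator `D` and all the components
`u*, v*, w*, z*` of the coexistence steady state are strictly positive. -/
theorem stmt_10 (a₁ a₂ a₃ a₄ a₅ a₆ α β γ : ℝ)
    (ha₁ : 0 < a₁) (ha₂ : 0 < a₂) (ha₃ : 0 < a₃) (ha₄ : 0 < a₄)
    (ha₅ : 0 < a₅) (ha₆ : 0 < a₆) (hα : 0 < α) (hβ : 0 < β) (hγ : 0 < γ)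
    (h1 : a₂ * a₆ < 1 + a₁ + a₂ + a₁ * a₄ + a₄ * a₆)
    (h2 : a₃ * (a₂ * a₆) < 1 + a₁ * (a₃ + a₄ * a₅) + a₄ * a₆ + a₂ * a₅)
    (h3 : a₃ * (1 + a₂) + a₄ * a₅ < 1 + a₄ + a₂ * a₅)
    (h4 : a₅ * (1 + a₁) + a₆ < 1 + a₃ * (a₁ + a₆))
    (D : ℝ) (hD_def : D = 1 + a₁ * (a₃ + a₄ * a₅) + a₄ * a₆ + a₂ * (a₅ - a₃ * a₆)) :
    0 < D ∧
      0 < (1 + a₁ + a₂ + a₁ * a₄ + a₆ * (a₄ - a₂)) / D ∧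
        0 < (1 - a₃ * (1 + a₂) + a₄ + a₅ * (a₂ - a₄)) / D ∧
          0 < (1 + a₁ * (a₃ - a₅) - a₅ + a₆ * (a₃ - 1)) / D ∧
            0 < (α * ((1 - a₃ * (1 + a₂) + a₄ + a₅ * (a₂ - a₄)) / D) +
                  β * ((1 + a₁ * (a₃ - a₅) - a₅ + a₆ * (a₃ - 1)) / D)) / γ := by

  have hD : 0 < D := by rw [hD_def]; nlinarith [h2]
  have hu : 0 < 1 + a₁ + a₂ + a₁ * a₄ + a₆ * (a₄ - a₂) := by nlinarith [h1]
  have hv : 0 < 1 - a₃ * (1 + a₂) + a₄ + a₅ * (a₂ - a₄) := by nlinarith [h3]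
  have hw : 0 < 1 + a₁ * (a₃ - a₅) - a₅ + a₆ * (a₃ - 1) := by nlinarith [h4]
  refine ⟨hD, div_pos hu hD, div_pos hv hD, div_pos hw hD, div_pos ?_ hγ⟩
  exact add_pos (mul_pos hα (div_pos hv hD)) (mul_pos hβ (div_pos hw hD))
end
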